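/- Let (A, ·, Δᵣ) be a quasi-triangular perm bialgebra, i.e., r ∈ A⊗A is a solution of the perm Yang-Baxter equation with (R, ad)-invariant skew-symmetric part, and let ·ᵣ be the multiplication on A* dual to Δᵣ, given by a* ·ᵣ b* = L*(Tᵣ(a*))b* + ad*(T_{σ(r)}(b*))a*. Then both Tᵣ and T_{σ(r)}: A* → A are perm algebra homomorphisms from (A*, ·ᵣ) to (A, ·). -/

import Mathlib

open TensorProduct

section
variable {K : Type*} [Field K] {A : Type*} [AddCommGroup A] [Module K A]

/-- perm identity for a plain binary operation -/
def IsPermFn {X : Type*} (mu : X → X → X) : Prop :=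
  ∀ a b c : X, mu a (mu b c) = mu (mu a b) c ∧ mu (mu a b) c = mu (mu b a) c

/-- perm algebra: bundled bilinear multiplication satisfying the perm identities -/
def IsPermMul (m : A →ₗ[K] A →ₗ[K] A) : Prop :=
  ∀ a b c : A, m a (m b c) = m (m a b) c ∧ m (m a b) c = m (m b a) c

/-- The map `T_r : A* → A` associated with a 2-tensor `r ∈ A ⊗ A`,
`T_r(a*) = Σ ⟨a*, a_i⟩ b_i` for `r = Σ a_i ⊗ b_i`. -/
noncomputable def Tten (r : A ⊗[K] A) : Module.Dual K A →ₗ[K] A :=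
  TensorProduct.lift (LinearMap.mk₂ K
    (fun a b => (Module.Dual.eval K A a).smulRight b)
    (by intro a a' b; ext f; simp [add_smul])
    (by intro c a b; ext f; simp [mul_smul])
    (by intro a b b'; ext f; simp [smul_add])
    (by intro c a b; ext f; simp [smul_comm c])) r

noncomputable def mulT (m : A →ₗ[K] A →ₗ[K] A) : A ⊗[K] A →ₗ[K] A := TensorProduct.lift m

noncomputable def p13_23 (m : A →ₗ[K] A →ₗ[K] A) :
    (A ⊗[K] A) ⊗[K] (A ⊗[K] A) →ₗ[K] (A ⊗[K] A) ⊗[K] A :=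
  (TensorProduct.map LinearMap.id (mulT m)) ∘ₗ
    (TensorProduct.tensorTensorTensorComm K A A A A).toLinearMap

noncomputable def p12_13 (m : A →ₗ[K] A →ₗ[K] A) :
    (A ⊗[K] A) ⊗[K] (A ⊗[K] A) →ₗ[K] (A ⊗[K] A) ⊗[K] A :=
  (TensorProduct.assoc K A A A).symm.toLinearMap ∘ₗ
    (TensorProduct.map (mulT m) LinearMap.id) ∘ₗ
    (TensorProduct.tensorTensorTensorComm K A A A A).toLinearMap

noncomputable def p13_12 (m : A →ₗ[K] A →ₗ[K] A) :
    (A ⊗[K] A) ⊗[K] (A ⊗[K] A) →ₗ[K] (A ⊗[K] A) ⊗[K] A :=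
  (TensorProduct.assoc K A A A).symm.toLinearMap ∘ₗ
    (TensorProduct.map (mulT m) (TensorProduct.comm K A A).toLinearMap) ∘ₗ
    (TensorProduct.tensorTensorTensorComm K A A A A).toLinearMap

noncomputable def p12_23 (m : A →ₗ[K] A →ₗ[K] A) :
    (A ⊗[K] A) ⊗[K] (A ⊗[K] A) →ₗ[K] (A ⊗[K] A) ⊗[K] A :=
  (TensorProduct.assoc K A A A).symm.toLinearMap ∘ₗ
    (TensorProduct.leftComm K A A A).toLinearMap ∘ₗ
    (TensorProduct.map (mulT m) LinearMap.id) ∘ₗ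
    (TensorProduct.tensorTensorTensorComm K A A A A).toLinearMap ∘ₗ
    (TensorProduct.map (TensorProduct.comm K A A).toLinearMap LinearMap.id)

/-- `[[r,r]] = r₁₂·r₂₃ − r₁₃·r₂₃ + r₁₂·r₁₃ − r₁₃·r₁₂` -/
noncomputable def ybrac (m : A →ₗ[K] A →ₗ[K] A) (r : A ⊗[K] A) : (A ⊗[K] A) ⊗[K] A :=
  p12_23 m (r ⊗ₜ r) - p13_23 m (r ⊗ₜ r) + p12_13 m (r ⊗ₜ r) - p13_12 m (r ⊗ₜ r)

/-- the perm Yang-Baxter equation -/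
noncomputable def IsPYBESol (m : A →ₗ[K] A →ₗ[K] A) (r : A ⊗[K] A) : Prop := ybrac m r = 0

/-- `(id ⊗ R(a) − ad(a) ⊗ id)(s) = 0` for all `a`. -/
def RadInv (m : A →ₗ[K] A →ₗ[K] A) (s : A ⊗[K] A) : Prop :=
  ∀ a : A, TensorProduct.map LinearMap.id (m.flip a) s
    = TensorProduct.map (m a - m.flip a) LinearMap.id s

variable {V : Type*} [AddCommGroup V] [Module K V]

/-- representation of a perm algebra -/
def IsPermRep (m : A →ₗ[K] A →ₗ[K] A) (l rr : A →ₗ[K] V →ₗ[K] V) : Prop :=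
  ∀ a b : A, l (m a b) = l a ∘ₗ l b ∧ l a ∘ₗ l b = l b ∘ₗ l a ∧
    rr (m a b) = rr b ∘ₗ rr a ∧ rr b ∘ₗ rr a = rr b ∘ₗ l a ∧ rr b ∘ₗ l a = l a ∘ₗ rr b

/-- A-perm algebra -/
def IsAPermAlg (m : A →ₗ[K] A →ₗ[K] A) (l rr : A →ₗ[K] V →ₗ[K] V)
    (mV : V →ₗ[K] V →ₗ[K] V) : Prop :=
  IsPermRep m l rr ∧ IsPermMul mV ∧
  (∀ (a : A) (u w : V), rr a (mV u w) = rr a (mV w u) ∧ rr a (mV u w) = mV u (rr a w)) ∧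
  (∀ (a : A) (u w : V), mV (l a u) w = mV (rr a u) w ∧ mV (l a u) w = l a (mV u w) ∧
    l a (mV u w) = mV u (l a w))

/-!
Contracting `[[r,r]]` against `f ⊗ g` in its first two tensor factors turns its four terms
into `T_r(L*(T_r f) g)`, `T_r f · T_r g`, `T_r(L*(h) f)` and `T_r(R*(h) f)` with
`h = T_{σ(r)} g`, so the perm Yang-Baxter equation says exactly `T_r(f ·ᵣ g) = T_r f · T_r g`.
Contracting instead the first and third factors gives
`T_r f · h = T_{σ(r)}(L*(T_r f) g) + T_r(ad*(h) f)`; contracting the invariance identity at `h`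
against `f` gives `(T_r f - T_{σ(r)} f) · h = (T_r - T_{σ(r)})(ad*(h) f)`, and the difference of
the two is `T_{σ(r)}(f ·ᵣ g) = T_{σ(r)} f · h`.
-/

@[simp] lemma Tten_tmul (a b : A) (f : Module.Dual K A) : Tten (a ⊗ₜ[K] b) f = f a • b := by
  simp [Tten]

@[simp] lemma Tten_zero : Tten (0 : A ⊗[K] A) = 0 := by
  simp [Tten]

lemma Tten_add (r s : A ⊗[K] A) : Tten (r + s) = Tten r + Tten s := by
  simp [Tten]

lemma Tten_sub (r s : A ⊗[K] A) : Tten (r - s) = Tten r - Tten s := by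
  simp [Tten]

lemma Tten_map_id_left (φ : A →ₗ[K] A) (s : A ⊗[K] A) (f : Module.Dual K A) :
    Tten (TensorProduct.map LinearMap.id φ s) f = φ (Tten s f) := by
  induction s using TensorProduct.induction_on with
  | zero => simp
  | tmul a b => simp
  | add s t hs ht => simp [Tten_add, hs, ht]

lemma Tten_map_id_right (ψ : A →ₗ[K] A) (s : A ⊗[K] A) (f : Module.Dual K A) :
    Tten (TensorProduct.map ψ LinearMap.id s) f = Tten s (ψ.dualMap f) := by
  induction s using TensorProduct.induction_on with
  | zero => simp
  | tmul a b => simp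
  | add s t hs ht => simp [Tten_add, hs, ht]

theorem RadInv.mul_Tten {m : A →ₗ[K] A →ₗ[K] A} {s : A ⊗[K] A} (hs : RadInv m s)
    (a : A) (f : Module.Dual K A) :
    m (Tten s f) a = Tten s ((m a - m.flip a).dualMap f) := by
  simpa [Tten_map_id_left, Tten_map_id_right] using congrArg (Tten · f) (hs a)

noncomputable def contract12 (f g : Module.Dual K A) : (A ⊗[K] A) ⊗[K] A →ₗ[K] A :=
  TensorProduct.lid K A ∘ₗ (LinearMap.mul' K K ∘ₗ TensorProduct.map f g).rTensor A

noncomputable def contract13 (f g : Module.Dual K A) : (A ⊗[K] A) ⊗[K] A →ₗ[K] A :=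
  contract12 f g ∘ₗ (TensorProduct.rightComm K A A A).toLinearMap

@[simp] lemma contract12_tmul (f g : Module.Dual K A) (x y z : A) :
    contract12 f g ((x ⊗ₜ[K] y) ⊗ₜ[K] z) = (f x * g y) • z := by
  simp [contract12]

@[simp] lemma contract13_tmul (f g : Module.Dual K A) (x y z : A) :
    contract13 f g ((x ⊗ₜ[K] y) ⊗ₜ[K] z) = (f x * g z) • y := by
  simp [contract13]

section Contractions

variable (m : A →ₗ[K] A →ₗ[K] A) (f g : Module.Dual K A) (r s : A ⊗[K] A)

lemma contract12_p12_23 :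
    contract12 f g (p12_23 m (r ⊗ₜ s)) = Tten s ((m (Tten r f)).dualMap g) := by
  induction r using TensorProduct.induction_on with
  | zero => simp [LinearMap.dualMap_apply']
  | add r r' hr hr' => simp_all [add_tmul, Tten_add, LinearMap.dualMap_apply', LinearMap.comp_add]
  | tmul a b =>
    induction s using TensorProduct.induction_on with
    | zero => simp
    | add s s' hs hs' => simp_all [tmul_add, Tten_add]
    | tmul c d => simp [p12_23, mulT]

lemma contract12_p13_23 :
    contract12 f g (p13_23 m (r ⊗ₜ s)) = m (Tten r f) (Tten s g) := by
  induction r using TensorProduct.induction_on with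
  | zero => simp
  | add r r' hr hr' => simp_all [add_tmul, Tten_add]
  | tmul a b =>
    induction s using TensorProduct.induction_on with
    | zero => simp
    | add s s' hs hs' => simp_all [tmul_add, Tten_add]
    | tmul c d => simp [p13_23, mulT, smul_smul, mul_comm]

lemma contract12_p12_13 :
    contract12 f g (p12_13 m (r ⊗ₜ s))
      = Tten s ((m (Tten (TensorProduct.comm K A A r) g)).dualMap f) := by
  induction r using TensorProduct.induction_on with
  | zero => simp [LinearMap.dualMap_apply']
  | add r r' hr hr' => simp_all [add_tmul, Tten_add, LinearMap.dualMap_apply', LinearMap.comp_add]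
  | tmul a b =>
    induction s using TensorProduct.induction_on with
    | zero => simp
    | add s s' hs hs' => simp_all [tmul_add, Tten_add]
    | tmul c d => simp [p12_13, mulT, mul_comm]

lemma contract12_p13_12 :
    contract12 f g (p13_12 m (r ⊗ₜ s))
      = Tten r ((m.flip (Tten (TensorProduct.comm K A A s) g)).dualMap f) := by
  induction r using TensorProduct.induction_on with
  | zero => simp [LinearMap.dualMap_apply']
  | add r r' hr hr' => simp_all [add_tmul, Tten_add, LinearMap.dualMap_apply']
  | tmul a b =>
    induction s using TensorProduct.induction_on with
    | zero => simp
    | add s s' hs hs' => simp_all [tmul_add, Tten_add, add_smul]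
    | tmul c d => simp [p13_12, mulT, mul_comm]

lemma contract13_p12_23 :
    contract13 f g (p12_23 m (r ⊗ₜ s))
      = m (Tten r f) (Tten (TensorProduct.comm K A A s) g) := by
  induction r using TensorProduct.induction_on with
  | zero => simp
  | add r r' hr hr' => simp_all [add_tmul, Tten_add]
  | tmul a b =>
    induction s using TensorProduct.induction_on with
    | zero => simp
    | add s s' hs hs' => simp_all [tmul_add, Tten_add]
    | tmul c d => simp [p12_23, mulT, smul_smul, mul_comm]

lemma contract13_p13_23 :
    contract13 f g (p13_23 m (r ⊗ₜ s))
      = Tten (TensorProduct.comm K A A s) ((m (Tten r f)).dualMap g) := by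
  induction r using TensorProduct.induction_on with
  | zero => simp [LinearMap.dualMap_apply']
  | add r r' hr hr' => simp_all [add_tmul, Tten_add, LinearMap.dualMap_apply', LinearMap.comp_add]
  | tmul a b =>
    induction s using TensorProduct.induction_on with
    | zero => simp
    | add s s' hs hs' => simp_all [tmul_add, Tten_add]
    | tmul c d => simp [p13_23, mulT]

lemma rightComm_p12_13 (t : (A ⊗[K] A) ⊗[K] (A ⊗[K] A)) :
    TensorProduct.rightComm K A A A (p12_13 m t) = p13_12 m t := by
  have h : (TensorProduct.rightComm K A A A).toLinearMap ∘ₗ p12_13 m = p13_12 m := by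
    ext; simp [p12_13, p13_12, mulT]
  exact LinearMap.congr_fun h t

lemma contract13_p12_13 (t : (A ⊗[K] A) ⊗[K] (A ⊗[K] A)) :
    contract13 f g (p12_13 m t) = contract12 f g (p13_12 m t) := by
  simp [contract13, rightComm_p12_13]

lemma contract13_p13_12 (t : (A ⊗[K] A) ⊗[K] (A ⊗[K] A)) :
    contract13 f g (p13_12 m t) = contract12 f g (p12_13 m t) := by
  rw [← rightComm_p12_13]
  exact congrArg (contract12 f g) ((TensorProduct.rightComm K A A A).symm_apply_apply _)

end Contractions

/-- The product `f ·ᵣ g` on `A*`, the linear dual of `Δᵣ`. -/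
noncomputable def dualMul (m : A →ₗ[K] A →ₗ[K] A) (r : A ⊗[K] A) (f g : Module.Dual K A) :
    Module.Dual K A :=
  (m (Tten r f)).dualMap g
    + (m (Tten (TensorProduct.comm K A A r) g)
        - m.flip (Tten (TensorProduct.comm K A A r) g)).dualMap f

section YangBaxter

variable (m : A →ₗ[K] A →ₗ[K] A) (r : A ⊗[K] A)

lemma contract12_ybrac (f g : Module.Dual K A) :
    contract12 f g (ybrac m r) = Tten r (dualMul m r f g) - m (Tten r f) (Tten r g) := by
  simp only [ybrac, map_add, map_sub, contract12_p12_23, contract12_p13_23, contract12_p12_13,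
    contract12_p13_12, dualMul, LinearMap.dualMap_apply', LinearMap.comp_sub]
  abel

lemma contract13_ybrac (f g : Module.Dual K A) :
    contract13 f g (ybrac m r) = m (Tten r f) (Tten (TensorProduct.comm K A A r) g)
      - Tten (TensorProduct.comm K A A r) ((m (Tten r f)).dualMap g)
      - Tten r ((m (Tten (TensorProduct.comm K A A r) g)
          - m.flip (Tten (TensorProduct.comm K A A r) g)).dualMap f) := by
  simp only [ybrac, map_add, map_sub, contract13_p12_23, contract13_p13_23, contract13_p12_13,
    contract13_p13_12, contract12_p12_13, contract12_p13_12, LinearMap.dualMap_apply',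
    LinearMap.comp_sub]
  abel

variable {m r}

theorem Tten_dualMul (hr : IsPYBESol m r) (f g : Module.Dual K A) :
    Tten r (dualMul m r f g) = m (Tten r f) (Tten r g) := by
  rw [← sub_eq_zero, ← contract12_ybrac, hr, map_zero]

theorem Tten_comm_dualMul (hr : IsPYBESol m r)
    (hinv : RadInv m (r - TensorProduct.comm K A A r)) (f g : Module.Dual K A) :
    Tten (TensorProduct.comm K A A r) (dualMul m r f g)
      = m (Tten (TensorProduct.comm K A A r) f) (Tten (TensorProduct.comm K A A r) g) := by
  have hybe := contract13_ybrac m r f g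
  rw [hr, map_zero] at hybe
  have hmul := hinv.mul_Tten (Tten (TensorProduct.comm K A A r) g) f
  rw [Tten_sub, LinearMap.sub_apply, LinearMap.sub_apply, map_sub, LinearMap.sub_apply] at hmul
  rw [dualMul, map_add]
  linear_combination (norm := module) hmul + hybe

end YangBaxter

theorem stmt19_general (m : A →ₗ[K] A →ₗ[K] A)
    (r : A ⊗[K] A) (hr : IsPYBESol m r)
    (hinv : RadInv m (r - (TensorProduct.comm K A A) r)) :
    ∀ f g : Module.Dual K A,
      (Tten r ((m (Tten r f)).dualMap g
          + (m (Tten ((TensorProduct.comm K A A) r) g)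
             - m.flip (Tten ((TensorProduct.comm K A A) r) g)).dualMap f)
        = m (Tten r f) (Tten r g)) ∧
      (Tten ((TensorProduct.comm K A A) r) ((m (Tten r f)).dualMap g
          + (m (Tten ((TensorProduct.comm K A A) r) g)
             - m.flip (Tten ((TensorProduct.comm K A A) r) g)).dualMap f)
        = m (Tten ((TensorProduct.comm K A A) r) f)
            (Tten ((TensorProduct.comm K A A) r) g)) :=
  fun f g => ⟨Tten_dualMul hr f g, Tten_comm_dualMul hr hinv f g⟩

theorem stmt19 [FiniteDimensional K A] (m : A →ₗ[K] A →ₗ[K] A) (hm : IsPermMul m)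
    (r : A ⊗[K] A) (hr : IsPYBESol m r)
    (hinv : RadInv m (r - (TensorProduct.comm K A A) r)) :
    ∀ f g : Module.Dual K A,
      (Tten r ((m (Tten r f)).dualMap g
          + (m (Tten ((TensorProduct.comm K A A) r) g)
             - m.flip (Tten ((TensorProduct.comm K A A) r) g)).dualMap f)
        = m (Tten r f) (Tten r g)) ∧
      (Tten ((TensorProduct.comm K A A) r) ((m (Tten r f)).dualMap g
          + (m (Tten ((TensorProduct.comm K A A) r) g)
             - m.flip (Tten ((TensorProduct.comm K A A) r) g)).dualMap f)
        = m (Tten ((TensorProduct.comm K A A) r) f)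
            (Tten ((TensorProduct.comm K A A) r) g)) :=
  stmt19_general m r hr hinv

end
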